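/- Best NNIL-approximation: for every modal proposition A, the NNIL-algorithm on input A terminates, its output A^* is an NNIL proposition with IPC_□ ⊢ A^*→A, and A^* is the best NNIL approximation of A from below: for every NNIL proposition B with IPC_□ ⊢ B→A one has IPC_□ ⊢ B→A^*. Moreover the construction is monotone: IPC_□ ⊢ A₁→A₂ implies IPC_□ ⊢ A₁^*→A₂^*. -/

import Mathlib

namespace PLHA

/-! ## Modal propositional language -/

/-- Modal propositional formulas: atomic variables, ⊥, ∧, ∨, →, □. -/
inductive Form : Type
  | var : ℕ → Form
  | bot : Form
  | and : Form → Form → Form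
  | or  : Form → Form → Form
  | imp : Form → Form → Form
  | box : Form → Form
  deriving DecidableEq

namespace Form

/-- ⊤ -/
def top : Form := imp bot bot

/-- A ↔ B -/
def iffF (A B : Form) : Form := and (imp A B) (imp B A)

/-- ⊡A := A ∧ □A -/
def boxdot (A : Form) : Form := and A (box A)

/-- `A ∈ NOI`: every occurrence of → is in the scope of some □. -/
def noi : Form → Bool
  | var _ => true
  | bot => true
  | and A B => noi A && noi B
  | or A B => noi A && noi B
  | imp _ _ => false
  | box _ => true

/-- The Leivant translation `A^l`. -/
def lev : Form → Form
  | var n => var n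
  | bot => bot
  | and A B => and (lev A) (lev B)
  | or A B => or (boxdot (lev A)) (boxdot (lev B))
  | imp A B => if noi A then imp A (lev B) else imp A B
  | box A => box A

/-- atomic propositions: atomic variables and ⊥. -/
def isAtom (A : Form) : Prop := (∃ n, A = var n) ∨ A = bot

/-- boxed propositions. -/
def isBoxed (A : Form) : Prop := ∃ B, A = box B

/-- non-modal (□-free) propositions. -/
def boxFree : Form → Bool
  | var _ => true
  | bot => true
  | and A B => boxFree A && boxFree B
  | or A B => boxFree A && boxFree B
  | imp A B => boxFree A && boxFree B
  | box _ => false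

/-- A bound on the indices of the variables occurring in a formula. -/
def fvb : Form → ℕ
  | var n => n + 1
  | bot => 0
  | and A B => max (fvb A) (fvb B)
  | or A B => max (fvb A) (fvb B)
  | imp A B => max (fvb A) (fvb B)
  | box A => fvb A

/-- maximal nesting depth of boxes. -/
def bdep : Form → ℕ
  | var _ => 0
  | bot => 0
  | and A B => max (bdep A) (bdep B)
  | or A B => max (bdep A) (bdep B)
  | imp A B => max (bdep A) (bdep B)
  | box A => bdep A + 1

/-- the complexity measure ρ used to define NNIL. -/
def rho : Form → ℕ
  | var _ => 0
  | bot => 0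
  | and A B => max (rho A) (rho B)
  | or A B => max (rho A) (rho B)
  | imp A B => max (rho A + 1) (rho B)
  | box _ => 0

end Form

/-- NNIL: no nested implications to the left. -/
def NNILc (A : Form) : Prop := Form.rho A ≤ 1

/-- TNNIL: thoroughly NNIL propositions. -/
inductive TNNIL : Form → Prop
  | var (n : ℕ) : TNNIL (.var n)
  | bot : TNNIL .bot
  | and {A B} : TNNIL A → TNNIL B → TNNIL (.and A B)
  | or {A B} : TNNIL A → TNNIL B → TNNIL (.or A B)
  | box {A} : TNNIL A → TNNIL (.box A)
  | imp {A B} : A.noi = true → TNNIL A → TNNIL B → TNNIL (.imp A B)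

/-- TNNIL⁻: propositions of the form B(□C₁,…,□Cₙ) with B non-modal and Cᵢ ∈ TNNIL. -/
inductive TNNILminus : Form → Prop
  | var (n : ℕ) : TNNILminus (.var n)
  | bot : TNNILminus .bot
  | box {A} : TNNIL A → TNNILminus (.box A)
  | and {A B} : TNNILminus A → TNNILminus B → TNNILminus (.and A B)
  | or {A B} : TNNILminus A → TNNILminus B → TNNILminus (.or A B)
  | imp {A B} : TNNILminus A → TNNILminus B → TNNILminus (.imp A B)

/-! ## Proof systems -/

/-- Hilbert-style axioms of intuitionistic propositional logic (over the modal language). -/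
inductive IpcAx : Form → Prop
  | a1 (A B) : IpcAx (.imp A (.imp B A))
  | a2 (A B C) : IpcAx (.imp (.imp A (.imp B C)) (.imp (.imp A B) (.imp A C)))
  | a3 (A B) : IpcAx (.imp A (.imp B (.and A B)))
  | a4 (A B) : IpcAx (.imp (.and A B) A)
  | a5 (A B) : IpcAx (.imp (.and A B) B)
  | a6 (A B) : IpcAx (.imp A (.or A B))
  | a7 (A B) : IpcAx (.imp B (.or A B))
  | a8 (A B C) : IpcAx (.imp (.imp A C) (.imp (.imp B C) (.imp (.or A B) C)))
  | a9 (A) : IpcAx (.imp .bot A)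

/-- Derivability from IPC axioms together with extra axioms `Ax`, modus ponens,
and (if `useNec = true`) the necessitation rule. -/
inductive Proves (Ax : Form → Prop) (useNec : Bool) : Form → Prop
  | ax {A} : Ax A → Proves Ax useNec A
  | ipc {A} : IpcAx A → Proves Ax useNec A
  | mp {A B} : Proves Ax useNec (.imp A B) → Proves Ax useNec A → Proves Ax useNec B
  | nec {A} : useNec = true → Proves Ax useNec A → Proves Ax useNec (.box A)

/-- K and 4 axiom schemas. -/
inductive K4Ax : Form → Prop
  | k (A B) : K4Ax (.imp (.box (.imp A B)) (.imp (.box A) (.box B)))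
  | four (A) : K4Ax (.imp (.box A) (.box (.box A)))

/-- K, 4, and Löb's axiom schemas. -/
inductive GLAx : Form → Prop
  | k (A B) : GLAx (.imp (.box (.imp A B)) (.imp (.box A) (.box B)))
  | four (A) : GLAx (.imp (.box A) (.box (.box A)))
  | lob (A) : GLAx (.imp (.box (.imp (.box A) A)) (.box A))

/-- IPC_□ : intuitionistic propositional logic over the modal language. -/
def IPCbProves : Form → Prop := Proves (fun _ => False) false

/-- iK4. -/
def iK4Proves : Form → Prop := Proves K4Ax true

/-- iGL. -/
def iGLProves : Form → Prop := Proves GLAx true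

/-- the completeness principle CP : A → □A. -/
def CPAx : Form → Prop := fun F => ∃ A : Form, F = .imp A (.box A)

/-- LC := iGL + CP. -/
def LCProves : Form → Prop := Proves (fun F => GLAx F ∨ CPAx F) true

/-- CP restricted to atomic propositions. -/
def CPaAx : Form → Prop := fun F => ∃ A : Form, A.isAtom ∧ F = .imp A (.box A)

/-- the extended Leivant principle Le⁺ : □A → □A^l. -/
def LeplusAx : Form → Prop := fun F => ∃ A : Form, F = .imp (.box A) (.box A.lev)

/-- LLe⁺ := iGL + Le⁺ + CP_a. -/
def LLeplusProves : Form → Prop := Proves (fun F => GLAx F ∨ LeplusAx F ∨ CPaAx F) true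

/-! ## The preservativity relation ▶ -/

/-- the bracket operation [A]B. -/
def bracket (A : Form) : Form → Form
  | .and B C => .and (bracket A B) (bracket A C)
  | .or B C => .or (bracket A B) (bracket A C)
  | .imp B C => .imp A (.imp B C)
  | B => B

def listConj : List Form → Form
  | [] => Form.top
  | [A] => A
  | A :: l => .and A (listConj l)

def listDisj : List Form → Form
  | [] => Form.bot
  | [A] => A
  | A :: l => .or A (listDisj l)

/-- the relation ▶ : the smallest relation satisfying A1–A4 and B1–B3.
In B2 a (finite) set of implications is represented by a list `X` of pairs `(E, F)`
standing for the implications `E → F`. -/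
inductive Pres : Form → Form → Prop
  | a1 {A B} : iK4Proves (.imp A B) → Pres A B
  | a2 {A B C} : Pres A B → Pres B C → Pres A C
  | a3 {A B C} : Pres C A → Pres C B → Pres C (.and A B)
  | a4 {A B} : Pres A B → Pres (.box A) (.box B)
  | b1 {A B C} : Pres A C → Pres B C → Pres (.or A B) C
  | b2 (X : List (Form × Form)) (C : Form) :
      Pres (.imp (listConj (X.map fun p => Form.imp p.1 p.2)) C)
        (listDisj ((X.map Prod.fst ++ [C]).map
          (bracket (listConj (X.map fun p => Form.imp p.1 p.2)))))
  | b3 {A B C} : Pres A B → (C.isAtom ∨ C.isBoxed) → Pres (.imp C A) (.imp C B)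

/-- the axioms of H_σ : LLe⁺ + CP_a + {□A→□B : A ▶ B}. -/
def HsigmaAx : Form → Prop := fun F =>
  GLAx F ∨ LeplusAx F ∨ CPaAx F ∨ ∃ A B : Form, Pres A B ∧ F = .imp (.box A) (.box B)

/-- H_σ. -/
def HsigmaProves : Form → Prop := Proves HsigmaAx true

/-! ## NNIL/TNNIL approximations -/

/-- `star` is (a realization of) Visser's NNIL-algorithm: `star A` is the best NNIL
approximation of `A` from below. -/
def IsNNILApproxOp (star : Form → Form) : Prop :=
  ∀ A : Form, NNILc (star A) ∧ IPCbProves (.imp (star A) A) ∧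
    ∀ B : Form, NNILc B → IPCbProves (.imp B A) → IPCbProves (.imp B (star A))

/-- replace the outermost boxed subformulas of a formula by the fresh variables
`k, k+1, …` (left to right), returning the resulting non-modal skeleton together
with the list of bodies of removed boxes. -/
def strip : Form → ℕ → Form × List Form
  | .var n, _ => (.var n, [])
  | .bot, _ => (.bot, [])
  | .and A B, k =>
      let pa := strip A k
      let pb := strip B (k + pa.2.length)
      (.and pa.1 pb.1, pa.2 ++ pb.2)
  | .or A B, k =>
      let pa := strip A k
      let pb := strip B (k + pa.2.length)
      (.or pa.1 pb.1, pa.2 ++ pb.2)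
  | .imp A B, k =>
      let pa := strip A k
      let pb := strip B (k + pa.2.length)
      (.imp pa.1 pb.1, pa.2 ++ pb.2)
  | .box A, k => (.var k, [A])

/-- simultaneous substitution of formulas for variables. -/
def substF (f : ℕ → Form) : Form → Form
  | .var n => f n
  | .bot => .bot
  | .and A B => .and (substF f A) (substF f B)
  | .or A B => .or (substF f A) (substF f B)
  | .imp A B => .imp (substF f A) (substF f B)
  | .box A => .box (substF f A)

/-- fuelled version of the TNNIL approximation `A⁺`:
`A⁺ := (A')^*[pᵢ | □Bᵢ⁺]` where `A = A'[pᵢ | □Bᵢ]` with `A'` non-modal. -/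
def plusAux (star : Form → Form) : ℕ → Form → Form
  | 0, A => A
  | fuel + 1, A =>
      let k := A.fvb
      let p := strip A k
      substF (fun n =>
        if k ≤ n ∧ n < k + p.2.length then
          .box (plusAux star fuel (p.2.getD (n - k) .bot))
        else .var n) (star p.1)

/-- the TNNIL approximation `A⁺` (relative to a realization `star` of the NNIL-algorithm). -/
def plusF (star : Form → Form) (A : Form) : Form := plusAux star (A.bdep + 1) A

/-- `A⁻`: writing `A = B(□C₁,…,□Cₙ)` with `B` non-modal, `A⁻ := B(□C₁⁺,…,□Cₙ⁺)`. -/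
def minusF (star : Form → Form) (A : Form) : Form :=
  let k := A.fvb
  let p := strip A k
  substF (fun n =>
    if k ≤ n ∧ n < k + p.2.length then
      .box (plusF star (p.2.getD (n - k) .bot))
    else .var n) p.1

/-- the box translation A^□. -/
def boxTr : Form → Form
  | .var n => Form.boxdot (.var n)
  | .bot => Form.boxdot .bot
  | .and A B => .and (boxTr A) (boxTr B)
  | .or A B => .or (boxTr A) (boxTr B)
  | .imp A B => Form.boxdot (.imp (boxTr A) (boxTr B))
  | .box A => .box (boxTr A)

/-- a Gödel numbering of modal formulas. -/
def encodeForm : Form → ℕ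
  | .var n => Nat.pair 0 n
  | .bot => Nat.pair 1 0
  | .and A B => Nat.pair 2 (Nat.pair (encodeForm A) (encodeForm B))
  | .or A B => Nat.pair 3 (Nat.pair (encodeForm A) (encodeForm B))
  | .imp A B => Nat.pair 4 (Nat.pair (encodeForm A) (encodeForm B))
  | .box A => Nat.pair 5 (encodeForm A)

/-! ## Propositional Kripke models -/

/-- Kripke models for intuitionistic modal logic. -/
structure PKripke where
  W : Type
  le : W → W → Prop
  r : W → W → Prop
  V : W → ℕ → Prop
  le_refl : ∀ w, le w w
  le_trans : ∀ {a b c}, le a b → le b c → le a c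
  le_antisymm : ∀ {a b}, le a b → le b a → a = b
  le_r : ∀ {a b c}, le a b → r b c → r a c
  mono : ∀ {a b : W} {n : ℕ}, le a b → V a n → V b n

/-- the forcing relation of a propositional modal Kripke model. -/
def pforces (M : PKripke) : Form → M.W → Prop
  | .var n, w => M.V w n
  | .bot, _ => False
  | .and A B, w => pforces M A w ∧ pforces M B w
  | .or A B, w => pforces M A w ∨ pforces M B w
  | .imp A B, w => ∀ v, M.le w v → pforces M A v → pforces M B v
  | .box A, w => ∀ v, M.r w v → pforces M A v

namespace PKripke

/-- brilliant: (R;≤) ⊆ R. -/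
def Brilliant (M : PKripke) : Prop := ∀ {a b c : M.W}, M.r a b → M.le b c → M.r a c

/-- reverse well-founded: well-founded with respect to R⁻¹. -/
def RevWF (M : PKripke) : Prop := WellFounded (fun a b : M.W => M.r b a)

/-- perfect: brilliant, reverse well-founded, and R ⊆ <. -/
def Perfect (M : PKripke) : Prop :=
  M.Brilliant ∧ M.RevWF ∧ ∀ {a b : M.W}, M.r a b → M.le a b ∧ a ≠ b

/-- the partial order (W,≤) is a tree: it has a root and the set of predecessors
of every node is linearly ordered. -/
def TreeFrame (M : PKripke) : Prop :=
  (∃ root : M.W, ∀ w, M.le root w) ∧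
  ∀ w u v : M.W, M.le u w → M.le v w → (M.le u v ∨ M.le v u)

end PKripke

/-! ## First-order arithmetic -/

/-- terms of the language (S, +, ·, <, 0) (de Bruijn variables). -/
inductive ATerm : Type
  | var : ℕ → ATerm
  | zero : ATerm
  | succ : ATerm → ATerm
  | add : ATerm → ATerm → ATerm
  | mul : ATerm → ATerm → ATerm
  deriving DecidableEq

namespace ATerm

def lift : ATerm → ℕ → ATerm
  | var n, d => if n < d then var n else var (n + 1)
  | zero, _ => zero
  | succ t, d => succ (t.lift d)
  | add t u, d => add (t.lift d) (u.lift d)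
  | mul t u, d => mul (t.lift d) (u.lift d)

def subst : ATerm → ℕ → ATerm → ATerm
  | var n, k, s => if n < k then var n else if n = k then s else var (n - 1)
  | zero, _, _ => zero
  | succ t, k, s => succ (t.subst k s)
  | add t u, k, s => add (t.subst k s) (u.subst k s)
  | mul t u, k, s => mul (t.subst k s) (u.subst k s)

/-- non-binding substitution: replace `var k` by `s`, leaving other variables alone. -/
def substId : ATerm → ℕ → ATerm → ATerm
  | var n, k, s => if n = k then s else var n
  | zero, _, _ => zero
  | succ t, k, s => succ (t.substId k s)
  | add t u, k, s => add (t.substId k s) (u.substId k s)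
  | mul t u, k, s => mul (t.substId k s) (u.substId k s)

/-- all variables have index < k. -/
def vlt : ATerm → ℕ → Prop
  | var n, k => n < k
  | zero, _ => True
  | succ t, k => t.vlt k
  | add t u, k => t.vlt k ∧ u.vlt k
  | mul t u, k => t.vlt k ∧ u.vlt k

/-- evaluation in the standard model ℕ. -/
def evalN : ATerm → (ℕ → ℕ) → ℕ
  | var n, ρ => ρ n
  | zero, _ => 0
  | succ t, ρ => t.evalN ρ + 1
  | add t u, ρ => t.evalN ρ + u.evalN ρ
  | mul t u, ρ => t.evalN ρ * u.evalN ρ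

def fvB : ATerm → ℕ
  | var n => n + 1
  | zero => 0
  | succ t => t.fvB
  | add t u => max t.fvB u.fvB
  | mul t u => max t.fvB u.fvB

/-- a Gödel numbering of terms. -/
def code : ATerm → ℕ
  | var n => Nat.pair 0 n
  | zero => Nat.pair 1 0
  | succ t => Nat.pair 2 t.code
  | add t u => Nat.pair 3 (Nat.pair t.code u.code)
  | mul t u => Nat.pair 4 (Nat.pair t.code u.code)

end ATerm

/-- the numeral of a natural number. -/
def numeral : ℕ → ATerm
  | 0 => .zero
  | n + 1 => .succ (numeral n)

/-- extend an environment by one value at index 0. -/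
def econs {α : Sort*} (b : α) (ρ : ℕ → α) : ℕ → α
  | 0 => b
  | n + 1 => ρ n

/-- first-order formulas of arithmetic (de Bruijn variables). -/
inductive AForm : Type
  | eq : ATerm → ATerm → AForm
  | lt : ATerm → ATerm → AForm
  | fal : AForm
  | and : AForm → AForm → AForm
  | or : AForm → AForm → AForm
  | imp : AForm → AForm → AForm
  | all : AForm → AForm
  | ex : AForm → AForm
  deriving DecidableEq

namespace AForm

def neg (A : AForm) : AForm := imp A fal

def iffA (A B : AForm) : AForm := and (imp A B) (imp B A)

def lift : AForm → ℕ → AForm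
  | eq t u, d => eq (t.lift d) (u.lift d)
  | lt t u, d => lt (t.lift d) (u.lift d)
  | fal, _ => fal
  | and A B, d => and (A.lift d) (B.lift d)
  | or A B, d => or (A.lift d) (B.lift d)
  | imp A B, d => imp (A.lift d) (B.lift d)
  | all A, d => all (A.lift (d + 1))
  | ex A, d => ex (A.lift (d + 1))

/-- capture-avoiding substitution of a term for variable `k` (instantiating a binder). -/
def subst : AForm → ℕ → ATerm → AForm
  | eq t u, k, s => eq (t.subst k s) (u.subst k s)
  | lt t u, k, s => lt (t.subst k s) (u.subst k s)
  | fal, _, _ => fal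
  | and A B, k, s => and (A.subst k s) (B.subst k s)
  | or A B, k, s => or (A.subst k s) (B.subst k s)
  | imp A B, k, s => imp (A.subst k s) (B.subst k s)
  | all A, k, s => all (A.subst (k + 1) (s.lift 0))
  | ex A, k, s => ex (A.subst (k + 1) (s.lift 0))

/-- non-binding substitution: replace the free variable `k` by `s`. -/
def substId : AForm → ℕ → ATerm → AForm
  | eq t u, k, s => eq (t.substId k s) (u.substId k s)
  | lt t u, k, s => lt (t.substId k s) (u.substId k s)
  | fal, _, _ => fal
  | and A B, k, s => and (A.substId k s) (B.substId k s)
  | or A B, k, s => or (A.substId k s) (B.substId k s)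
  | imp A B, k, s => imp (A.substId k s) (B.substId k s)
  | all A, k, s => all (A.substId (k + 1) (s.lift 0))
  | ex A, k, s => ex (A.substId (k + 1) (s.lift 0))

/-- all free variables have index < k. -/
def vlt : AForm → ℕ → Prop
  | eq t u, k => t.vlt k ∧ u.vlt k
  | lt t u, k => t.vlt k ∧ u.vlt k
  | fal, _ => True
  | and A B, k => A.vlt k ∧ B.vlt k
  | or A B, k => A.vlt k ∧ B.vlt k
  | imp A B, k => A.vlt k ∧ B.vlt k
  | all A, k => A.vlt (k + 1)
  | ex A, k => A.vlt (k + 1)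

/-- a bound on the free variables of a formula. -/
def fvB : AForm → ℕ
  | eq t u => max t.fvB u.fvB
  | lt t u => max t.fvB u.fvB
  | fal => 0
  | and A B => max A.fvB B.fvB
  | or A B => max A.fvB B.fvB
  | imp A B => max A.fvB B.fvB
  | all A => A.fvB - 1
  | ex A => A.fvB - 1

/-- classical (Tarskian) satisfaction in the standard model ℕ. -/
def SatN : AForm → (ℕ → ℕ) → Prop
  | eq t u, ρ => t.evalN ρ = u.evalN ρ
  | lt t u, ρ => t.evalN ρ < u.evalN ρ
  | fal, _ => False
  | and A B, ρ => A.SatN ρ ∧ B.SatN ρ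
  | or A B, ρ => A.SatN ρ ∨ B.SatN ρ
  | imp A B, ρ => A.SatN ρ → B.SatN ρ
  | all A, ρ => ∀ n : ℕ, A.SatN (econs n ρ)
  | ex A, ρ => ∃ n : ℕ, A.SatN (econs n ρ)

/-- a Gödel numbering of arithmetic formulas. -/
def code : AForm → ℕ
  | eq t u => Nat.pair 0 (Nat.pair t.code u.code)
  | lt t u => Nat.pair 1 (Nat.pair t.code u.code)
  | fal => Nat.pair 2 0
  | and A B => Nat.pair 3 (Nat.pair A.code B.code)
  | or A B => Nat.pair 4 (Nat.pair A.code B.code)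
  | imp A B => Nat.pair 5 (Nat.pair A.code B.code)
  | all A => Nat.pair 6 A.code
  | ex A => Nat.pair 7 A.code

end AForm

/-- Δ₀ formulas: only bounded quantifiers. -/
inductive Delta0 : AForm → Prop
  | eq (t u) : Delta0 (.eq t u)
  | lt (t u) : Delta0 (.lt t u)
  | fal : Delta0 .fal
  | and {A B} : Delta0 A → Delta0 B → Delta0 (.and A B)
  | or {A B} : Delta0 A → Delta0 B → Delta0 (.or A B)
  | imp {A B} : Delta0 A → Delta0 B → Delta0 (.imp A B)
  | ball (t : ATerm) {A} : Delta0 A → Delta0 (.all (.imp (.lt (.var 0) (t.lift 0)) A))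
  | bex (t : ATerm) {A} : Delta0 A → Delta0 (.ex (.and (.lt (.var 0) (t.lift 0)) A))

/-- Σ₁ formulas: existential quantifiers over a Δ₀ matrix. -/
inductive Sigma1 : AForm → Prop
  | of_delta0 {A} : Delta0 A → Sigma1 A
  | ex {A} : Sigma1 A → Sigma1 (.ex A)

/-- a Hilbert-style proof system for intuitionistic first-order logic with equality,
from a set `T` of (closed) non-logical axioms. -/
inductive Prf (T : AForm → Prop) : AForm → Prop
  | hyp {A} : T A → Prf T A
  | mp {A B} : Prf T (.imp A B) → Prf T A → Prf T B
  | gen {A} : Prf T A → Prf T (.all A)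
  | k (A B) : Prf T (.imp A (.imp B A))
  | s (A B C) : Prf T (.imp (.imp A (.imp B C)) (.imp (.imp A B) (.imp A C)))
  | pair (A B) : Prf T (.imp A (.imp B (.and A B)))
  | fst (A B) : Prf T (.imp (.and A B) A)
  | snd (A B) : Prf T (.imp (.and A B) B)
  | inl (A B) : Prf T (.imp A (.or A B))
  | inr (A B) : Prf T (.imp B (.or A B))
  | cases (A B C) : Prf T (.imp (.imp A C) (.imp (.imp B C) (.imp (.or A B) C)))
  | exfalso (A) : Prf T (.imp .fal A)
  | allE (A : AForm) (t : ATerm) : Prf T (.imp (.all A) (A.subst 0 t))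
  | allShift (A B : AForm) : Prf T (.imp (.all (.imp (B.lift 0) A)) (.imp B (.all A)))
  | exI (A : AForm) (t : ATerm) : Prf T (.imp (A.subst 0 t) (.ex A))
  | exE (A B : AForm) : Prf T (.imp (.all (.imp A (B.lift 0))) (.imp (.ex A) B))
  | eqRefl : Prf T (.all (.eq (.var 0) (.var 0)))
  | leibniz (A : AForm) : Prf T (.all (.all (.imp (.eq (.var 1) (.var 0))
      (.imp (((A.lift 1).lift 1).substId 0 (.var 1))
            (((A.lift 1).lift 1).substId 0 (.var 0))))))

/-- iterated universal quantification. -/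
def ucAux : ℕ → AForm → AForm
  | 0, A => A
  | k + 1, A => ucAux k (.all A)

/-- universal closure. -/
def uc (A : AForm) : AForm := ucAux A.fvB A

/-- the induction axiom for the formula A (induction on variable 0). -/
def indAx (A : AForm) : AForm :=
  uc (.imp (.and (A.subst 0 .zero) (.all (.imp A (A.substId 0 (.succ (.var 0))))))
      (.all A))

/-- the axioms Q1–Q8. -/
inductive QAx : AForm → Prop
  | q1 : QAx (.all (.imp (.eq (.succ (.var 0)) .zero) .fal))
  | q2 : QAx (.all (.all (.imp (.eq (.succ (.var 1)) (.succ (.var 0))) (.eq (.var 1) (.var 0)))))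
  | q3 : QAx (.all (.or (.eq (.var 0) .zero) (.ex (.eq (.succ (.var 0)) (.var 1)))))
  | q4 : QAx (.all (.eq (.add (.var 0) .zero) (.var 0)))
  | q5 : QAx (.all (.all (.eq (.add (.var 1) (.succ (.var 0))) (.succ (.add (.var 1) (.var 0))))))
  | q6 : QAx (.all (.eq (.mul (.var 0) .zero) .zero))
  | q7 : QAx (.all (.all (.eq (.mul (.var 1) (.succ (.var 0))) (.add (.mul (.var 1) (.var 0)) (.var 1)))))
  | q8 : QAx (.all (.all (AForm.iffA (.lt (.var 1) (.var 0))
      (.ex (.eq (.add (.var 2) (.succ (.var 0))) (.var 1))))))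

/-- the axioms of Heyting Arithmetic: Q1–Q8 and full induction. -/
def HAAx : AForm → Prop := fun A => QAx A ∨ ∃ B : AForm, A = indAx B

/-- provability in HA. -/
def HAProves : AForm → Prop := Prf HAAx

/-- interface for the standard arithmetized provability predicate `Prov_HA` of HA:
`Pr A` is the Σ₁ sentence `Prov_HA(⌜A⌝)`. -/
structure ProvPred where
  Pr : AForm → AForm
  sentence : ∀ A, (Pr A).vlt 0
  sigma1 : ∀ A, Sigma1 (Pr A)
  correct : ∀ A : AForm, ((Pr A).SatN (fun _ => 0) ↔ HAProves A)
  dNec : ∀ A, HAProves A → HAProves (Pr A)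
  dK : ∀ A B, HAProves (.imp (Pr (.imp A B)) (.imp (Pr A) (Pr B)))
  dSigma : ∀ A, Sigma1 A → A.vlt 0 → HAProves (.imp A (Pr A))
  dLob : ∀ A, HAProves (.imp (Pr (.imp (Pr A) A)) (Pr A))

/-- the arithmetical interpretation `σ_HA` of modal formulas determined by a
substitution `σ` and a provability predicate `Pr`. -/
def interp (Pr : AForm → AForm) (σ : ℕ → AForm) : Form → AForm
  | .var n => σ n
  | .bot => .fal
  | .and A B => .and (interp Pr σ A) (interp Pr σ B)
  | .or A B => .or (interp Pr σ A) (interp Pr σ B)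
  | .imp A B => .imp (interp Pr σ A) (interp Pr σ B)
  | .box A => Pr (interp Pr σ A)

/-- σ is an arithmetical substitution: it maps atomic variables to sentences. -/
def ArithSubst (σ : ℕ → AForm) : Prop := ∀ n, (σ n).vlt 0

/-- σ is a Σ₁-substitution: it maps atomic variables to Σ₁ sentences. -/
def Sigma1Subst (σ : ℕ → AForm) : Prop := ∀ n, Sigma1 (σ n) ∧ (σ n).vlt 0

/-! ## The theories HAₓ and indexed provability (for the refined Leivant principle) -/

/-- induction formulas of the special shape (A→B)→B with A, B ∈ Σ₁. -/
def shapeInd (A : AForm) : Prop := ∃ S Tf : AForm, Sigma1 S ∧ Sigma1 Tf ∧ A = .imp (.imp S Tf) Tf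

/-- the axioms of HAₓ: Q1-Q8, and induction restricted to formulas of the shape
(A→B)→B with A,B ∈ Σ₁ or with Gödel number ≤ x. -/
def HAxAx (x : ℕ) : AForm → Prop := fun A =>
  QAx A ∨ ∃ B : AForm, (shapeInd B ∨ B.code ≤ x) ∧ A = indAx B

/-- interface for the arithmetized bounded provability predicates `□ₓ`:
`PrB A` is the Σ₁ formula with free variable 0 expressing `Prov_{HA_{v₀}}(⌜A⌝)`, and
`PrBSub A` (for `A` with one free variable) is the Σ₁ formula with free variables 0, 1
expressing `Prov_{HA_{v₀}}(⌜A(v̇₁)⌝)`. -/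
structure BddProvPred where
  PrB : AForm → AForm
  PrBSub : AForm → AForm
  PrB_vlt : ∀ A, (PrB A).vlt 1
  PrB_sigma1 : ∀ A, Sigma1 (PrB A)
  PrB_correct : ∀ (A : AForm) (n : ℕ),
    ((PrB A).SatN (fun i => if i = 0 then n else 0) ↔ Prf (HAxAx n) A)
  PrBSub_vlt : ∀ A, (PrBSub A).vlt 2
  PrBSub_sigma1 : ∀ A, Sigma1 (PrBSub A)
  PrBSub_correct : ∀ (A : AForm) (n m : ℕ),
    ((PrBSub A).SatN (fun i => if i = 0 then n else m) ↔ Prf (HAxAx n) (A.subst 0 (numeral m)))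

/-! ## First-order Kripke models of HA -/

/-- a first-order Kripke model for the language of arithmetic over the frame `(W, le)`:
each node carries a classical structure, and the structure at a smaller node is a weak
substructure of the structure at a bigger one (realized as subsets of a common universe,
closed under the operations). -/
structure FOKripke (W : Type) (le : W → W → Prop) where
  U : Type
  dom : W → Set U
  zero : U
  succ : U → U
  add : U → U → U
  mul : U → U → U
  ltR : U → U → Prop
  dom_mono : ∀ {a b : W}, le a b → dom a ⊆ dom b
  zero_mem : ∀ a, zero ∈ dom a
  succ_mem : ∀ a x, x ∈ dom a → succ x ∈ dom a
  add_mem : ∀ a x y, x ∈ dom a → y ∈ dom a → add x y ∈ dom a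
  mul_mem : ∀ a x y, x ∈ dom a → y ∈ dom a → mul x y ∈ dom a

/-- evaluation of a term in a first-order Kripke model. -/
def tevalK {W : Type} {le : W → W → Prop} (M : FOKripke W le) (ρ : ℕ → M.U) : ATerm → M.U
  | .var n => ρ n
  | .zero => M.zero
  | .succ t => M.succ (tevalK M ρ t)
  | .add t u => M.add (tevalK M ρ t) (tevalK M ρ u)
  | .mul t u => M.mul (tevalK M ρ t) (tevalK M ρ u)

/-- the forcing relation of a first-order Kripke model. -/
def FOForces {W : Type} {le : W → W → Prop} (M : FOKripke W le) :
    AForm → W → (ℕ → M.U) → Prop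
  | .eq t u, _, ρ => tevalK M ρ t = tevalK M ρ u
  | .lt t u, _, ρ => M.ltR (tevalK M ρ t) (tevalK M ρ u)
  | .fal, _, _ => False
  | .and A B, w, ρ => FOForces M A w ρ ∧ FOForces M B w ρ
  | .or A B, w, ρ => FOForces M A w ρ ∨ FOForces M B w ρ
  | .imp A B, w, ρ => ∀ v, le w v → FOForces M A v ρ → FOForces M B v ρ
  | .all A, w, ρ => ∀ v, le w v → ∀ b ∈ M.dom v, FOForces M A v (econs b ρ)
  | .ex A, w, ρ => ∃ b ∈ M.dom w, FOForces M A w (econs b ρ)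

/-- the Kripke model forces all axioms of HA. -/
def ForcesHA {W : Type} {le : W → W → Prop} (M : FOKripke W le) : Prop :=
  ∀ A : AForm, HAAx A → ∀ w : W, FOForces M A w (fun _ => M.zero)

end PLHA

namespace PLHA

/-! `A^*` is computed by a terminating proof search for `⊢ A` in a contraction-free (G4ip-style)
calculus: invertible rules are applied eagerly, and where a non-invertible step is needed the
output offers, as NNIL disjuncts, the atomic goal or the disjuncts of the goal together with every
way of using an implication hypothesis. `A^* → A` holds in all Kripke models. Conversely, from a
world `w` refuting `A^*` one builds a countermodel of `A` that is subsimulated into the cone above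
`w`, by gluing the countermodels of the failed branches under a new root with the atoms of `w`.
NNIL formulas are preserved backwards along subsimulations, so an NNIL `B` with `B → A` forces
`A^*` wherever it holds. Kripke completeness of IPC_□ turns both facts into derivations, and
monotonicity is optimality applied to `A₁^*`. -/

def Derivable (Γ : Set Form) (A : Form) : Prop := Proves (· ∈ Γ) false A

namespace Derivable

variable {Γ Δ : Set Form} {A B C : Form}

theorem of_mem (h : A ∈ Γ) : Derivable Γ A := .ax h

theorem of_ipcAx (h : IpcAx A) : Derivable Γ A := .ipc h

theorem mp (h₁ : Derivable Γ (.imp A B)) (h₂ : Derivable Γ A) : Derivable Γ B := Proves.mp h₁ h₂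

theorem mono (h : Derivable Γ A) (hΓ : Γ ⊆ Δ) : Derivable Δ A := by
  induction h with
  | ax h => exact of_mem (hΓ h)
  | ipc h => exact of_ipcAx h
  | mp _ _ ih₁ ih₂ => exact ih₁.mp ih₂
  | nec h => cases h

theorem imp_self : Derivable Γ (.imp A A) :=
  ((of_ipcAx (.a2 A (.imp A A) A)).mp (of_ipcAx (.a1 _ _))).mp (of_ipcAx (.a1 _ _))

theorem deduction (h : Derivable (insert A Γ) B) : Derivable Γ (.imp A B) := by
  induction h with
  | ax h =>
    rcases h with rfl | h
    · exact imp_self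
    · exact (of_ipcAx (.a1 _ _)).mp (of_mem h)
  | ipc h => exact (of_ipcAx (.a1 _ _)).mp (of_ipcAx h)
  | mp _ _ ih₁ ih₂ => exact ((of_ipcAx (.a2 _ _ _)).mp ih₁).mp ih₂
  | nec h => cases h

theorem cut (h₁ : Derivable Γ A) (h₂ : Derivable (insert A Γ) B) : Derivable Γ B :=
  h₂.deduction.mp h₁

theorem exists_mem_of_sUnion {c : Set (Set Form)} (hc : IsChain (· ⊆ ·) c) (hne : c.Nonempty)
    (h : Derivable (⋃₀ c) A) : ∃ Γ ∈ c, Derivable Γ A := by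
  induction h with
  | ax h =>
    obtain ⟨Γ, hΓ, hA⟩ := Set.mem_sUnion.1 h
    exact ⟨Γ, hΓ, of_mem hA⟩
  | ipc h => exact ⟨hne.some, hne.some_mem, of_ipcAx h⟩
  | mp _ _ ih₁ ih₂ =>
    obtain ⟨Γ₁, hΓ₁, h₁⟩ := ih₁
    obtain ⟨Γ₂, hΓ₂, h₂⟩ := ih₂
    rcases hc.total hΓ₁ hΓ₂ with h | h
    · exact ⟨Γ₂, hΓ₂, (h₁.mono h).mp h₂⟩
    · exact ⟨Γ₁, hΓ₁, h₁.mp (h₂.mono h)⟩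
  | nec h => cases h

end Derivable

structure IsPrimeTheory (Γ : Set Form) : Prop where
  mem_of_derivable : ∀ {A}, Derivable Γ A → A ∈ Γ
  bot_not_mem : Form.bot ∉ Γ
  mem_or_mem : ∀ {A B}, Form.or A B ∈ Γ → A ∈ Γ ∨ B ∈ Γ

theorem IsPrimeTheory.of_not_derivable {Δ : Set Form} {C : Form} (hΔC : ¬ Derivable Δ C)
    (hins : ∀ A ∉ Δ, Derivable (insert A Δ) C) : IsPrimeTheory Δ where
  mem_of_derivable hA := by_contra fun hA' => hΔC (hA.cut (hins _ hA'))
  bot_not_mem hbot := hΔC ((Derivable.of_ipcAx (.a9 C)).mp (.of_mem hbot))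
  mem_or_mem {A B} hAB := by
    by_contra! hnot
    exact hΔC ((((Derivable.of_ipcAx (.a8 A B C)).mp (hins A hnot.1).deduction).mp
      (hins B hnot.2).deduction).mp (.of_mem hAB))

theorem exists_isPrimeTheory {Γ : Set Form} {C : Form} (h : ¬ Derivable Γ C) :
    ∃ Δ, Γ ⊆ Δ ∧ IsPrimeTheory Δ ∧ C ∉ Δ := by
  have hchain : ∀ c ⊆ {Δ | Γ ⊆ Δ ∧ ¬ Derivable Δ C}, IsChain (· ⊆ ·) c → c.Nonempty →
      ∃ ub ∈ {Δ | Γ ⊆ Δ ∧ ¬ Derivable Δ C}, ∀ Δ ∈ c, Δ ⊆ ub := by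
    intro c hcS hc hne
    refine ⟨⋃₀ c, ⟨(hcS hne.some_mem).1.trans (Set.subset_sUnion_of_mem hne.some_mem),
      fun hC => ?_⟩, fun _ => Set.subset_sUnion_of_mem⟩
    obtain ⟨Δ, hΔ, hΔC⟩ := Derivable.exists_mem_of_sUnion hc hne hC
    exact (hcS hΔ).2 hΔC
  obtain ⟨Δ, hΓΔ, hmax⟩ := zorn_subset_nonempty _ hchain Γ ⟨subset_rfl, h⟩
  refine ⟨Δ, hΓΔ, .of_not_derivable hmax.prop.2 fun A hA => ?_,
    fun hC => hmax.prop.2 (.of_mem hC)⟩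
  by_contra hAC
  exact hA (hmax.eq_of_subset ⟨hmax.prop.1.trans (Set.subset_insert _ _), hAC⟩
    (Set.subset_insert _ _) ▸ Set.mem_insert _ _)

/-- The valuation `V` is consulted only at variables and boxed formulas, which IPC_□ treats as
atoms. -/
structure KripkeModel where
  W : Type
  [preorder : Preorder W]
  V : W → Form → Prop
  V_mono : ∀ {v w : W} {A : Form}, v ≤ w → V v A → V w A

attribute [instance] KripkeModel.preorder

namespace KripkeModel

def Forces (M : KripkeModel) : M.W → Form → Prop
  | w, .var n => M.V w (.var n)
  | _, .bot => False
  | w, .and A B => M.Forces w A ∧ M.Forces w B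
  | w, .or A B => M.Forces w A ∨ M.Forces w B
  | w, .imp A B => ∀ v, w ≤ v → M.Forces v A → M.Forces v B
  | w, .box A => M.V w (.box A)

variable {M : KripkeModel}

theorem Forces.mono {v w : M.W} (hvw : v ≤ w) {A : Form} (h : M.Forces v A) : M.Forces w A := by
  induction A generalizing v w with
  | var | box => exact M.V_mono hvw h
  | bot => exact h
  | and A B ihA ihB => exact ⟨ihA hvw h.1, ihB hvw h.2⟩
  | or A B ihA ihB => exact h.imp (ihA hvw) (ihB hvw)
  | imp A B => exact fun u hwu => h u (hvw.trans hwu)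

theorem forces_of_ipcAx {w : M.W} {A : Form} (h : IpcAx A) : M.Forces w A := by
  cases h with
  | a1 => exact fun v _ hA u hvu _ => hA.mono hvu
  | a2 =>
    exact fun v _ hABC u hvu hAB t hut hA =>
      hABC t (hvu.trans hut) hA t le_rfl (hAB t hut hA)
  | a3 => exact fun v _ hA u hvu hB => ⟨hA.mono hvu, hB⟩
  | a4 => exact fun _ _ h => h.1
  | a5 => exact fun _ _ h => h.2
  | a6 => exact fun _ _ h => .inl h
  | a7 => exact fun _ _ h => .inr h
  | a8 => exact fun v _ hAC u hvu hBC t hut hAB =>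
      hAB.elim (hAC t (hvu.trans hut)) (hBC t hut)
  | a9 => exact fun _ _ h => h.elim

theorem forces_of_derivable {Γ : Set Form} {w : M.W} (hΓ : ∀ B ∈ Γ, M.Forces w B) {A : Form}
    (h : Derivable Γ A) : M.Forces w A := by
  induction h with
  | ax h => exact hΓ _ h
  | ipc h => exact forces_of_ipcAx h
  | mp _ _ ih₁ ih₂ => exact ih₁ w le_rfl ih₂
  | nec h => cases h

def ForcesImps (M : KripkeModel) (w : M.W) (X : List (Form × Form)) : Prop :=
  ∀ p ∈ X, M.Forces w (.imp p.1 p.2)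

theorem ForcesImps.mono {v w : M.W} (hvw : v ≤ w) {X : List (Form × Form)}
    (h : M.ForcesImps v X) : M.ForcesImps w X :=
  fun p hp => (h p hp).mono hvw

theorem forces_imp_and_iff {w : M.W} {A B K : Form} :
    M.Forces w (.imp (.and A B) K) ↔ M.Forces w (.imp A (.imp B K)) :=
  ⟨fun h _ hwv hA u hvu hB => h u (hwv.trans hvu) ⟨hA.mono hvu, hB⟩,
    fun h v hwv hAB => h v hwv hAB.1 v le_rfl hAB.2⟩

theorem forces_imp_or_iff {w : M.W} {A B K : Form} :
    M.Forces w (.imp (.or A B) K) ↔ M.Forces w (.imp A K) ∧ M.Forces w (.imp B K) :=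
  ⟨fun h => ⟨fun v hwv hA => h v hwv (.inl hA), fun v hwv hB => h v hwv (.inr hB)⟩,
    fun h v hwv hAB => hAB.elim (h.1 v hwv) (h.2 v hwv)⟩

theorem forces_listDisj {w : M.W} {l : List Form} :
    M.Forces w (listDisj l) ↔ ∃ A ∈ l, M.Forces w A := by
  induction l with
  | nil => simp [listDisj, Forces]
  | cons A l ih =>
    cases l with
    | nil => simp [listDisj]
    | cons B l => simp [listDisj, Forces, ih]

end KripkeModel

section Completeness

open KripkeModel

abbrev canonicalModel : KripkeModel where
  W := {Γ : Set Form // IsPrimeTheory Γ}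
  V Γ A := A ∈ Γ.1
  V_mono h hA := Set.mem_of_subset_of_mem h hA

theorem canonicalModel_forces_iff {Γ : Set Form} (hΓ : IsPrimeTheory Γ) (A : Form) :
    canonicalModel.Forces ⟨Γ, hΓ⟩ A ↔ A ∈ Γ := by
  induction A generalizing Γ with
  | var | box => rfl
  | bot => exact iff_of_false id hΓ.bot_not_mem
  | and A B ihA ihB =>
    change _ ∧ _ ↔ _
    rw [ihA hΓ, ihB hΓ]
    refine ⟨fun h => hΓ.mem_of_derivable ?_,
      fun h => ⟨hΓ.mem_of_derivable ?_, hΓ.mem_of_derivable ?_⟩⟩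
    · exact ((Derivable.of_ipcAx (.a3 A B)).mp (.of_mem h.1)).mp (.of_mem h.2)
    · exact (Derivable.of_ipcAx (.a4 A B)).mp (.of_mem h)
    · exact (Derivable.of_ipcAx (.a5 A B)).mp (.of_mem h)
  | or A B ihA ihB =>
    change _ ∨ _ ↔ _
    rw [ihA hΓ, ihB hΓ]
    refine ⟨fun h => hΓ.mem_of_derivable ?_, hΓ.mem_or_mem⟩
    rcases h with h | h
    · exact (Derivable.of_ipcAx (.a6 A B)).mp (.of_mem h)
    · exact (Derivable.of_ipcAx (.a7 A B)).mp (.of_mem h)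
  | imp A B ihA ihB =>
    refine ⟨fun h => ?_, fun h Δ hΓΔ hA => (ihB Δ.2).2 (Δ.2.mem_of_derivable
      ((Derivable.of_mem (hΓΔ h)).mp (.of_mem ((ihA Δ.2).1 hA))))⟩
    by_contra hAB
    obtain ⟨Δ, hAΓΔ, hΔ, hBΔ⟩ := exists_isPrimeTheory (Γ := insert A Γ) (C := B)
      fun hB => hAB (hΓ.mem_of_derivable hB.deduction)
    exact hBΔ ((ihB hΔ).1 (h ⟨Δ, hΔ⟩ ((Set.subset_insert _ _).trans hAΓΔ)
      ((ihA hΔ).2 (hAΓΔ (Set.mem_insert _ _)))))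

theorem ipcbProves_imp_iff {A B : Form} :
    IPCbProves (.imp A B) ↔ ∀ (M : KripkeModel) (w : M.W), M.Forces w A → M.Forces w B := by
  refine ⟨fun h M w hA => forces_of_derivable (Γ := ∅) (by simp) h w le_rfl hA, fun h => ?_⟩
  by_contra hAB
  obtain ⟨Δ, hAΔ, hΔ, hBΔ⟩ := exists_isPrimeTheory (Γ := insert A ∅) (C := B)
    fun hB => hAB hB.deduction
  exact hBΔ ((canonicalModel_forces_iff hΔ B).1
    (h _ _ ((canonicalModel_forces_iff hΔ A).2 (hAΔ (Set.mem_insert _ _)))))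

end Completeness

section Subsimulation

def IsSubsimulation (N M : KripkeModel) (Z : N.W → M.W → Prop) : Prop :=
  ∀ ⦃x y⦄, Z x y → (∀ a, N.V x a ↔ M.V y a) ∧ ∀ x', x ≤ x' → ∃ y', y ≤ y' ∧ Z x' y'

variable {N M : KripkeModel} {Z : N.W → M.W → Prop}

theorem IsSubsimulation.forces_iff_of_rho_eq_zero (hZ : IsSubsimulation N M Z) {A : Form}
    (hA : A.rho = 0) {x : N.W} {y : M.W} (hxy : Z x y) : N.Forces x A ↔ M.Forces y A := by
  induction A with
  | var | box => exact (hZ hxy).1 _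
  | bot => exact Iff.rfl
  | and A B ihA ihB =>
    simp only [Form.rho, Nat.max_eq_zero_iff] at hA
    exact and_congr (ihA hA.1) (ihB hA.2)
  | or A B ihA ihB =>
    simp only [Form.rho, Nat.max_eq_zero_iff] at hA
    exact or_congr (ihA hA.1) (ihB hA.2)
  | imp => simp [Form.rho] at hA

theorem IsSubsimulation.forces_of_nnil (hZ : IsSubsimulation N M Z) {A : Form} (hA : NNILc A)
    {x : N.W} {y : M.W} (hxy : Z x y) (h : M.Forces y A) : N.Forces x A := by
  induction A generalizing x y with
  | var | box => exact ((hZ hxy).1 _).2 h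
  | bot => exact h
  | and A B ihA ihB =>
    simp only [NNILc, Form.rho, max_le_iff] at hA
    exact ⟨ihA hA.1 hxy h.1, ihB hA.2 hxy h.2⟩
  | or A B ihA ihB =>
    simp only [NNILc, Form.rho, max_le_iff] at hA
    exact h.imp (ihA hA.1 hxy) (ihB hA.2 hxy)
  | imp A B _ ihB =>
    simp only [NNILc, Form.rho, max_le_iff] at hA
    intro x' hxx' hA'
    obtain ⟨y', hyy', hxy'⟩ := (hZ hxy).2 x' hxx'
    exact ihB hA.2 hxy' (h y' hyy' ((hZ.forces_iff_of_rho_eq_zero (by omega) hxy').1 hA'))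

end Subsimulation

structure PointedModel where
  N : KripkeModel
  root : N.W

namespace PointedModel

def Forces (c : PointedModel) (A : Form) : Prop := c.N.Forces c.root A

def ForcesImps (c : PointedModel) (X : List (Form × Form)) : Prop := c.N.ForcesImps c.root X

end PointedModel

def SubsimIntoCone (M : KripkeModel) (w : M.W) (c : PointedModel) : Prop :=
  ∃ w', w ≤ w' ∧ ∃ Z, IsSubsimulation c.N M Z ∧ Z c.root w'

namespace SubsimIntoCone

variable {M : KripkeModel} {w : M.W} {c : PointedModel}

theorem mono {v : M.W} (hvw : v ≤ w) (h : SubsimIntoCone M w c) : SubsimIntoCone M v c :=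
  let ⟨w', hww', hZ⟩ := h; ⟨w', hvw.trans hww', hZ⟩

theorem forces_of_rho_eq_zero (h : SubsimIntoCone M w c) {A : Form} (hA : A.rho = 0)
    (hw : M.Forces w A) : c.Forces A :=
  let ⟨_, hww', _, hZ, hZc⟩ := h
  (hZ.forces_iff_of_rho_eq_zero hA hZc).2 (hw.mono hww')

theorem forces_of_nnil (h : SubsimIntoCone M w c) {A : Form} (hA : NNILc A)
    (hw : M.Forces w A) : c.Forces A :=
  let ⟨_, hww', _, hZ, hZc⟩ := h
  hZ.forces_of_nnil hA hZc (hw.mono hww')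

end SubsimIntoCone

section Glue

variable {M : KripkeModel} (w : M.W) {ι : Type} (c : ι → PointedModel)

inductive GlueLe : Option (Σ i, (c i).N.W) → Option (Σ i, (c i).N.W) → Prop
  | root : GlueLe none none
  | root_le (i : ι) {v : (c i).N.W} : (c i).root ≤ v → GlueLe none (some ⟨i, v⟩)
  | le (i : ι) {v v' : (c i).N.W} : v ≤ v' → GlueLe (some ⟨i, v⟩) (some ⟨i, v'⟩)

variable {c} in
theorem GlueLe.exists_of_some {i : ι} {v : (c i).N.W} {z} (h : GlueLe c (some ⟨i, v⟩) z) :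
    ∃ v', z = some ⟨i, v'⟩ ∧ v ≤ v' := by
  cases h with
  | le i h => exact ⟨_, rfl, h⟩

def glueModel (hc : ∀ i, SubsimIntoCone M w (c i)) : KripkeModel where
  W := Option (Σ i, (c i).N.W)
  preorder :=
    { le := GlueLe c
      lt x y := GlueLe c x y ∧ ¬ GlueLe c y x
      le_refl := by
        rintro (_ | ⟨i, v⟩)
        exacts [.root, .le i le_rfl]
      le_trans := by
        intro x y z hxy hyz
        cases hxy with
        | root => exact hyz
        | root_le i h =>
          obtain ⟨v', rfl, h'⟩ := hyz.exists_of_some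
          exact .root_le i (h.trans h')
        | le i h =>
          obtain ⟨v', rfl, h'⟩ := hyz.exists_of_some
          exact .le i (h.trans h') }
  V x A := match x with
    | none => M.V w A
    | some ⟨i, v⟩ => (c i).N.V v A
  V_mono {x y A} hxy hA := by
    cases hxy with
    | root => exact hA
    | root_le i h =>
      obtain ⟨w', hww', Z, hZ, hZc⟩ := hc i
      exact (c i).N.V_mono h (((hZ hZc).1 A).2 (M.V_mono hww' hA))
    | le i h => exact (c i).N.V_mono h hA

variable (hc : ∀ i, SubsimIntoCone M w (c i))

theorem glueModel_forces_some {i : ι} {v : (c i).N.W} {A : Form} :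
    (glueModel w c hc).Forces (some ⟨i, v⟩) A ↔ (c i).N.Forces v A := by
  induction A generalizing v with
  | var | box | bot => exact Iff.rfl
  | and A B ihA ihB => exact and_congr ihA ihB
  | or A B ihA ihB => exact or_congr ihA ihB
  | imp A B ihA ihB =>
    refine ⟨fun h v' hvv' hA => ihB.1 (h (some ⟨i, v'⟩) (GlueLe.le i hvv') (ihA.2 hA)),
      fun h z hz hA => ?_⟩
    obtain ⟨v', rfl, hvv'⟩ := GlueLe.exists_of_some hz
    exact ihB.2 (h v' hvv' (ihA.1 hA))

def glueRel : (glueModel w c hc).W → M.W → Prop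
  | none, y => y = w
  | some ⟨i, v⟩, y => ∃ Z, IsSubsimulation (c i).N M Z ∧ Z v y

theorem isSubsimulation_glueRel : IsSubsimulation (glueModel w c hc) M (glueRel w c hc) := by
  rintro (_ | ⟨i, v⟩) y hxy
  · subst y
    refine ⟨fun _ => Iff.rfl, fun x' hx' => ?_⟩
    cases hx' with
    | root => exact ⟨w, le_rfl, rfl⟩
    | root_le i h =>
      obtain ⟨w', hww', Z, hZ, hZc⟩ := hc i
      obtain ⟨y', hw'y', hZ'⟩ := (hZ hZc).2 _ h
      exact ⟨y', hww'.trans hw'y', Z, hZ, hZ'⟩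
  · obtain ⟨Z, hZ, hZv⟩ := hxy
    refine ⟨(hZ hZv).1, fun x' hx' => ?_⟩
    obtain ⟨v', rfl, hvv'⟩ := GlueLe.exists_of_some hx'
    obtain ⟨y', hyy', hZ'⟩ := (hZ hZv).2 _ hvv'
    exact ⟨y', hyy', Z, hZ, hZ'⟩

def glue : PointedModel := ⟨glueModel w c hc, none⟩

theorem subsimIntoCone_glue : SubsimIntoCone M w (glue w c hc) :=
  ⟨w, le_rfl, _, isSubsimulation_glueRel w c hc, rfl⟩

variable {w c hc}

theorem forces_of_forces_glue {A : Form} (hA : A.rho = 0) (h : (glue w c hc).Forces A) :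
    M.Forces w A :=
  ((isSubsimulation_glueRel w c hc).forces_iff_of_rho_eq_zero hA (x := none) rfl).1 h

theorem PointedModel.Forces.of_glue {A : Form} (h : (glue w c hc).Forces A) (i : ι) :
    (c i).Forces A :=
  (glueModel_forces_some w c hc).1 (h.mono (GlueLe.root_le i le_rfl))

theorem forces_glue_imp {A B : Form}
    (h : (glue w c hc).Forces A → (glue w c hc).Forces B) (hAB : ∀ i, (c i).Forces (.imp A B)) :
    (glue w c hc).Forces (.imp A B) := by
  intro z hz hA
  cases hz with
  | root => exact h hA
  | root_le i hv =>
    exact (glueModel_forces_some w c hc).2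
      (hAB i _ hv ((glueModel_forces_some w c hc).1 hA))

end Glue

/-- After gluing, the members of a cover refute every antecedent of `X` at the new root. -/
structure IsCover (M : KripkeModel) (w : M.W) (X : List (Form × Form)) {ι : Type}
    (c : ι → PointedModel) : Prop where
  subsimIntoCone : ∀ i, SubsimIntoCone M w (c i)
  forcesImps : ∀ i, (c i).ForcesImps X
  refutes : ∀ p ∈ X, (∃ i, ¬ (c i).Forces p.1) ∨ (p.1.rho = 0 ∧ ¬ M.Forces w p.1)

namespace IsCover

variable {M : KripkeModel} {w : M.W} {X : List (Form × Form)} {ι : Type} {c : ι → PointedModel}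

theorem option (hK : IsCover M w X c) {d : PointedModel} (hd : SubsimIntoCone M w d)
    (hdX : d.ForcesImps X) : IsCover M w X (fun o : Option ι => o.elim d c) where
  subsimIntoCone o := by cases o <;> simp [hd, hK.subsimIntoCone]
  forcesImps o := by cases o <;> simp [hdX, hK.forcesImps]
  refutes p hp := (hK.refutes p hp).imp_left fun ⟨i, hi⟩ => ⟨some i, hi⟩

theorem forcesImps_glue (hK : IsCover M w X c) : (glue w c hK.subsimIntoCone).ForcesImps X :=
  fun p hp => forces_glue_imp
    (fun h => (hK.refutes p hp).elim (fun ⟨i, hi⟩ => (hi (h.of_glue i)).elim)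
      fun ⟨h0, hw⟩ => (hw (forces_of_forces_glue h0 h)).elim)
    fun i => hK.forcesImps i p hp

end IsCover

def Form.size : Form → ℕ
  | .and A B | .or A B => A.size + B.size + 2
  | .imp A B => A.size + B.size + 1
  | _ => 1

theorem Form.one_le_size (A : Form) : 1 ≤ A.size := by
  cases A <;> simp [Form.size]

def splits {α : Type*} : List α → List (α × List α)
  | [] => []
  | a :: l => (a, l) :: (splits l).map fun p => (p.1, a :: p.2)

theorem perm_of_mem_splits {α : Type*} {X : List α} {p : α × List α} (h : p ∈ splits X) :
    X.Perm (p.1 :: p.2) := by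
  induction X generalizing p with
  | nil => simp [splits] at h
  | cons a l ih =>
    rcases List.mem_cons.1 h with rfl | h
    · rfl
    · obtain ⟨q, hq, rfl⟩ := List.mem_map.1 h
      exact ((ih hq).cons a).trans (.swap q.1 a q.2)

theorem mem_iff_of_mem_splits {α : Type*} {X : List α} {p : α × List α} (h : p ∈ splits X) {a : α} :
    a ∈ X ↔ a = p.1 ∨ a ∈ p.2 := by
  rw [(perm_of_mem_splits h).mem_iff, List.mem_cons]

theorem exists_mem_splits {α : Type*} {X : List α} {a : α} (h : a ∈ X) :
    ∃ r, (a, r) ∈ splits X := by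
  induction X with
  | nil => simp at h
  | cons b l ih =>
    rcases List.mem_cons.1 h with rfl | h
    · exact ⟨l, List.mem_cons_self⟩
    · obtain ⟨r, hr⟩ := ih h
      exact ⟨b :: r, List.mem_cons_of_mem _ (List.mem_map.2 ⟨(a, r), hr, rfl⟩)⟩

def hypWeight (Δ : List Form) : ℕ := (Δ.map fun D => 4 ^ D.size).sum

def impWeight (X : List (Form × Form)) : ℕ := (X.map fun p => 4 ^ (p.1.size + p.2.size)).sum

theorem impWeight_of_mem_splits {X : List (Form × Form)} {p} (h : p ∈ splits X) :
    impWeight X = 4 ^ (p.1.1.size + p.1.2.size) + impWeight p.2 := by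
  simpa [impWeight] using ((perm_of_mem_splits h).map _).sum_eq

theorem hypWeight_add_one_lt {L : List Form} {n : ℕ} (hL : L.length ≤ 3)
    (h : ∀ D ∈ L, D.size < n) (hn : 0 < n) : hypWeight L + 1 < 4 ^ n := by
  obtain ⟨m, rfl⟩ : ∃ m, n = m + 1 := ⟨n - 1, by omega⟩
  have hle : hypWeight L ≤ L.length * 4 ^ m := by
    have := List.sum_le_card_nsmul (L.map fun D => 4 ^ D.size) (4 ^ m) (by
      simpa using fun D hD => Nat.pow_le_pow_right (by norm_num) (Nat.le_of_lt_succ (h D hD)))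
    simpa [hypWeight] using this
  rcases L with _ | ⟨D, L⟩
  · simp [hypWeight]
  · have : 4 ≤ 4 ^ m := by
      simpa using Nat.pow_le_pow_right (n := 4) (by norm_num)
        (show 1 ≤ m by have := h D (by simp); have := D.one_le_size; omega)
    rw [pow_succ]
    have : (D :: L).length * 4 ^ m ≤ 3 * 4 ^ m := Nat.mul_le_mul_right _ hL
    omega

theorem hypWeight_cons (D : Form) (Δ : List Form) :
    hypWeight (D :: Δ) = 4 ^ D.size + hypWeight Δ := rfl

theorem impWeight_cons (p : Form × Form) (X : List (Form × Form)) :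
    impWeight (p :: X) = 4 ^ (p.1.size + p.2.size) + impWeight X := rfl

theorem hypWeight_append_lt {L : List Form} {D : Form} (Δ : List Form) (hL : L.length ≤ 3)
    (h : ∀ D' ∈ L, D'.size < D.size) : hypWeight (L ++ Δ) < hypWeight (D :: Δ) := by
  have := hypWeight_add_one_lt hL h D.one_le_size
  simp only [hypWeight, List.map_append, List.sum_append, List.map_cons, List.sum_cons] at *
  omega

/-! `approxHyps X Δ C` approximates the sequent `X, Δ ⇒ C`, where the pair `(E, F) ∈ X` stands for
the hypothesis `E → F` with `E` an atom, a box or an implication, and `Δ` lists the hypotheses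
still to be decomposed; `approxGoal X C` approximates `X ⇒ C`. The disjunct of `approxUses X C`
for `(E, F) ∈ X` uses that hypothesis: prove `E` from the others, then continue with `F`.
`approxPremise X E F` approximates the proof of `E` from `X` and `E → F`; for `E = H → K` it is
the contraction-free step to `X, H, K → F ⇒ K`.

The weight `4 ^ size` of a formula exceeds that of the at most three formulas a rule replaces it
by (`hypWeight_add_one_lt`), and the factor `2` with the offsets orders `approxHyps X [] C`,
`approxGoal X C` and `approxUses X C`, which have equal weight. -/

mutual

def approxPremise (X : List (Form × Form)) (E F : Form) : Form :=
  match E with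
  | .imp H K => approxHyps X [H, .imp K F] K
  | E => E
termination_by 2 * (impWeight X + 4 ^ (E.size + F.size))
decreasing_by
  have := hypWeight_add_one_lt (L := [H, K.imp F, K]) (n := (H.imp K).size + F.size) (by simp)
    (by have := H.one_le_size; simp [Form.size]; omega) (by simp [Form.size])
  simp only [hypWeight_cons] at *
  omega

def approxUses (X : List (Form × Form)) (C : Form) : List Form :=
  (splits X).attach.map fun pr =>
    .and (approxPremise pr.1.2 pr.1.1.1 pr.1.1.2) (approxHyps pr.1.2 [pr.1.1.2] C)
termination_by 2 * (impWeight X + 4 ^ C.size)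
decreasing_by
  all_goals rw [impWeight_of_mem_splits pr.2]
  · have := Nat.one_le_pow C.size 4 (by norm_num)
    omega
  · have := pr.1.1.1.one_le_size
    have := hypWeight_add_one_lt (L := [pr.1.1.2]) (n := pr.1.1.1.size + pr.1.1.2.size) (by simp)
      (by simp only [List.mem_singleton, forall_eq]; omega) (by omega)
    simp only [hypWeight_cons] at *
    omega

def approxGoal (X : List (Form × Form)) (C : Form) : Form :=
  match C with
  | .and C₁ C₂ => .and (approxGoal X C₁) (approxGoal X C₂)
  | .or C₁ C₂ => listDisj (approxGoal X C₁ :: approxGoal X C₂ :: approxUses X (.or C₁ C₂))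
  | .imp H K => approxHyps X [H] K
  | C => listDisj (C :: approxUses X C)
termination_by 2 * (impWeight X + 4 ^ C.size) + 1
decreasing_by
  all_goals first
    | omega
    | (gcongr
       · norm_num
       · simp only [Form.size]; omega)
    | (have := hypWeight_add_one_lt (L := [H, K]) (n := (H.imp K).size) (by simp)
        (by simp [Form.size]) (by simp [Form.size])
       simp only [hypWeight_cons] at *
       omega)

def approxHyps (X : List (Form × Form)) (Δ : List Form) (C : Form) : Form :=
  match Δ with
  | [] => approxGoal X C
  | .and D₁ D₂ :: Δ => approxHyps X (D₁ :: D₂ :: Δ) C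
  | .or D₁ D₂ :: Δ => .and (approxHyps X (D₁ :: Δ) C) (approxHyps X (D₂ :: Δ) C)
  | .imp (.and A B) K :: Δ => approxHyps X (.imp A (.imp B K) :: Δ) C
  | .imp (.or A B) K :: Δ => approxHyps X (.imp A K :: .imp B K :: Δ) C
  | .imp E K :: Δ => approxHyps ((E, K) :: X) Δ C
  | D :: Δ => .imp D (approxHyps X Δ C)
termination_by 2 * (impWeight X + hypWeight Δ + 4 ^ C.size) + 2
decreasing_by
  all_goals first
    | (simp only [hypWeight, List.map_nil, List.sum_nil]; omega)
    | (simp only [impWeight_cons, hypWeight_cons, Form.size]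
       have := Nat.pow_lt_pow_right (a := 4) (by norm_num) (Nat.lt_succ_self (E.size + K.size))
       omega)
    | gcongr
  · exact hypWeight_append_lt (L := [D₁, D₂]) Δ (by simp) (by simp [Form.size]; omega)
  · exact hypWeight_append_lt (L := [D₁]) Δ (by simp) (by simp [Form.size]; omega)
  · exact hypWeight_append_lt (L := [D₂]) Δ (by simp) (by simp [Form.size]; omega)
  · exact hypWeight_append_lt (L := [A.imp (B.imp K)]) Δ (by simp) (by simp [Form.size]; omega)
  · exact hypWeight_append_lt (L := [A.imp K, B.imp K]) Δ (by simp) (by simp [Form.size]; omega)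
  · exact hypWeight_append_lt (L := []) Δ (by simp) (by simp)

end

theorem mem_approxUses {X : List (Form × Form)} {C d : Form} :
    d ∈ approxUses X C ↔ ∃ pr ∈ splits X,
      d = .and (approxPremise pr.2 pr.1.1 pr.1.2) (approxHyps pr.2 [pr.1.2] C) := by
  rw [approxUses]
  simp only [List.mem_map, List.mem_attach, true_and, Subtype.exists]
  exact ⟨fun ⟨pr, hpr, h⟩ => ⟨pr, hpr, h.symm⟩, fun ⟨pr, hpr, h⟩ => ⟨pr, hpr, h.symm⟩⟩

def NoJunctionPremises (X : List (Form × Form)) : Prop :=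
  ∀ p ∈ X, (∀ A B, p.1 ≠ .and A B) ∧ ∀ A B, p.1 ≠ .or A B

theorem NoJunctionPremises.of_mem_splits {X : List (Form × Form)} (hX : NoJunctionPremises X) {pr}
    (hpr : pr ∈ splits X) : NoJunctionPremises pr.2 :=
  fun p hp => hX p ((mem_iff_of_mem_splits hpr).2 (.inr hp))

theorem Form.rho_eq_zero_of_ne {E : Form} (hand : ∀ A B, E ≠ .and A B) (hor : ∀ A B, E ≠ .or A B)
    (himp : ∀ A B, E ≠ .imp A B) : E.rho = 0 := by
  cases E <;> simp_all [Form.rho]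

theorem rho_listDisj_le {l : List Form} (h : ∀ A ∈ l, A.rho ≤ 1) : (listDisj l).rho ≤ 1 := by
  induction l with
  | nil => simp [listDisj, Form.rho]
  | cons A l ih =>
    cases l with
    | nil => simpa [listDisj] using h
    | cons B l =>
      simp only [List.mem_cons, forall_eq_or_imp] at h ih ⊢
      exact max_le h.1 (ih h.2)

theorem rho_approxGoal_le {X : List (Form × Form)} (hX : NoJunctionPremises X) (C : Form) :
    (approxGoal X C).rho ≤ 1 := by
  refine approxGoal.induct
    (motive1 := fun X E F => (∀ A B, E ≠ .and A B) → (∀ A B, E ≠ .or A B) →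
      NoJunctionPremises X → (approxPremise X E F).rho ≤ 1)
    (motive2 := fun X Δ C => NoJunctionPremises X → (approxHyps X Δ C).rho ≤ 1)
    (motive3 := fun X C => NoJunctionPremises X → (approxGoal X C).rho ≤ 1)
    (motive4 := fun X C => NoJunctionPremises X → ∀ d ∈ approxUses X C, d.rho ≤ 1)
    ?_ ?_ ?_ ?_ ?_ ?_ ?_ ?_ ?_ ?_ ?_ ?_ ?_ ?_ X C hX
  · intro X F H K ih _ _ hX
    rw [approxPremise.eq_1]
    exact ih hX
  · intro X F E himp hand hor _
    rw [approxPremise.eq_2 _ _ _ himp, Form.rho_eq_zero_of_ne hand hor himp]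
    exact zero_le_one
  · intro X C ih hX
    rw [approxHyps.eq_1]
    exact ih hX
  · intro X C D₁ D₂ Δ ih hX
    rw [approxHyps.eq_2]
    exact ih hX
  · intro X C D₁ D₂ Δ ih₁ ih₂ hX
    rw [approxHyps.eq_3]
    exact max_le (ih₁ hX) (ih₂ hX)
  · intro X C A B K Δ ih hX
    rw [approxHyps.eq_4]
    exact ih hX
  · intro X C A B K Δ ih hX
    rw [approxHyps.eq_5]
    exact ih hX
  · intro X C E K Δ hand hor ih hX
    rw [approxHyps.eq_6 _ _ _ _ _ hand hor]
    exact ih (List.forall_mem_cons.2 ⟨⟨hand, hor⟩, hX⟩)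
  · intro X C D Δ hand hor _ _ himp ih hX
    rw [approxHyps.eq_7 _ _ _ _ hand hor ‹_› ‹_› himp]
    simpa [Form.rho, Form.rho_eq_zero_of_ne hand hor himp] using ih hX
  · intro X C₁ C₂ ih₁ ih₂ hX
    rw [approxGoal.eq_1]
    exact max_le (ih₁ hX) (ih₂ hX)
  · intro X C₁ C₂ ih₁ ih₂ ihU hX
    rw [approxGoal.eq_2]
    exact rho_listDisj_le (by simpa using ⟨ih₁ hX, ih₂ hX, ihU hX⟩)
  · intro X H K ih hX
    rw [approxGoal.eq_3]
    exact ih hX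
  · intro X C hand hor himp ihU hX
    rw [approxGoal.eq_4 _ _ hand hor himp]
    exact rho_listDisj_le (by simpa [Form.rho_eq_zero_of_ne hand hor himp] using ihU hX)
  · intro X C ihP ihH hX d hd
    obtain ⟨pr, hpr, rfl⟩ := mem_approxUses.1 hd
    have hE := hX pr.1 ((mem_iff_of_mem_splits hpr).2 (.inl rfl))
    exact max_le (ihP ⟨pr, hpr⟩ hE.1 hE.2 (hX.of_mem_splits hpr))
      (ihH ⟨pr, hpr⟩ (hX.of_mem_splits hpr))

theorem KripkeModel.forcesImps_of_mem_splits {M : KripkeModel} {w : M.W} {X : List (Form × Form)}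
    {pr} (hpr : pr ∈ splits X) :
    M.ForcesImps w X ↔ M.Forces w (.imp pr.1.1 pr.1.2) ∧ M.ForcesImps w pr.2 := by
  simp only [KripkeModel.ForcesImps, mem_iff_of_mem_splits hpr, forall_eq_or_imp]

theorem forces_of_forces_approxGoal {M : KripkeModel} {X : List (Form × Form)} {C : Form} {w : M.W}
    (h : M.Forces w (approxGoal X C)) (hX : M.ForcesImps w X) : M.Forces w C := by
  refine approxGoal.induct
    (motive1 := fun X E F => ∀ w, M.Forces w (approxPremise X E F) → M.ForcesImps w X →
      M.Forces w (.imp E F) → M.Forces w E)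
    (motive2 := fun X Δ C => ∀ w, M.Forces w (approxHyps X Δ C) → M.ForcesImps w X →
      (∀ D ∈ Δ, M.Forces w D) → M.Forces w C)
    (motive3 := fun X C => ∀ w, M.Forces w (approxGoal X C) → M.ForcesImps w X → M.Forces w C)
    (motive4 := fun X C => ∀ w, ∀ d ∈ approxUses X C, M.Forces w d → M.ForcesImps w X →
      M.Forces w C)
    ?_ ?_ ?_ ?_ ?_ ?_ ?_ ?_ ?_ ?_ ?_ ?_ ?_ ?_ X C w h hX
  · intro X F H K ih w h hX hHKF v hwv hH
    rw [approxPremise.eq_1] at h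
    -- `K → F` holds above `v` because there `K`, hence `H → K`, gives `F`
    refine ih v (h.mono hwv) (hX.mono hwv) ?_
    simp only [List.mem_cons, List.not_mem_nil, or_false, forall_eq_or_imp, forall_eq]
    exact ⟨hH, fun u hvu hK => hHKF u (hwv.trans hvu) fun t hut _ => hK.mono hut⟩
  · intro X F E himp w h _ _
    rwa [approxPremise.eq_2 _ _ _ himp] at h
  · intro X C ih w h hX _
    rw [approxHyps.eq_1] at h
    exact ih w h hX
  · intro X C D₁ D₂ Δ ih w h hX hΔ
    rw [approxHyps.eq_2] at h
    exact ih w h hX (by simpa [KripkeModel.Forces, and_assoc] using hΔ)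
  · intro X C D₁ D₂ Δ ih₁ ih₂ w h hX hΔ
    rw [approxHyps.eq_3] at h
    obtain ⟨hD | hD, hΔ⟩ := List.forall_mem_cons.1 hΔ
    · exact ih₁ w h.1 hX (List.forall_mem_cons.2 ⟨hD, hΔ⟩)
    · exact ih₂ w h.2 hX (List.forall_mem_cons.2 ⟨hD, hΔ⟩)
  · intro X C A B K Δ ih w h hX hΔ
    rw [approxHyps.eq_4] at h
    exact ih w h hX (by simpa [KripkeModel.forces_imp_and_iff] using hΔ)
  · intro X C A B K Δ ih w h hX hΔ
    rw [approxHyps.eq_5] at h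
    exact ih w h hX (by simpa [KripkeModel.forces_imp_or_iff, and_assoc] using hΔ)
  · intro X C E K Δ hand hor ih w h hX hΔ
    rw [approxHyps.eq_6 _ _ _ _ _ hand hor] at h
    obtain ⟨hEK, hΔ⟩ := List.forall_mem_cons.1 hΔ
    exact ih w h (List.forall_mem_cons.2 ⟨hEK, hX⟩) hΔ
  · intro X C D Δ hand hor h₁ h₂ himp ih w h hX hΔ
    rw [approxHyps.eq_7 _ _ _ _ hand hor h₁ h₂ himp] at h
    obtain ⟨hD, hΔ⟩ := List.forall_mem_cons.1 hΔ
    exact ih w (h w le_rfl hD) hX hΔ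
  · intro X C₁ C₂ ih₁ ih₂ w h hX
    rw [approxGoal.eq_1] at h
    exact ⟨ih₁ w h.1 hX, ih₂ w h.2 hX⟩
  · intro X C₁ C₂ ih₁ ih₂ ihU w h hX
    rw [approxGoal.eq_2, KripkeModel.forces_listDisj] at h
    obtain ⟨d, hd, h⟩ := h
    simp only [List.mem_cons] at hd
    rcases hd with rfl | rfl | hd
    exacts [.inl (ih₁ w h hX), .inr (ih₂ w h hX), ihU w d hd h hX]
  · intro X H K ih w h hX v hwv hH
    rw [approxGoal.eq_3] at h
    exact ih v (h.mono hwv) (hX.mono hwv) (by simpa using hH)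
  · intro X C hand hor himp ihU w h hX
    rw [approxGoal.eq_4 _ _ hand hor himp, KripkeModel.forces_listDisj] at h
    obtain ⟨d, hd, h⟩ := h
    rcases List.mem_cons.1 hd with rfl | hd
    exacts [h, ihU w d hd h hX]
  · intro X C ihP ihH w d hd h hX
    obtain ⟨pr, hpr, rfl⟩ := mem_approxUses.1 hd
    obtain ⟨hEF, hXr⟩ := (KripkeModel.forcesImps_of_mem_splits hpr).1 hX
    have hE := ihP ⟨pr, hpr⟩ w h.1 hXr hEF
    exact ihH ⟨pr, hpr⟩ w h.2 hXr (by simpa using hEF w le_rfl hE)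

section Countermodels

def HasCountermodel (M : KripkeModel) (w : M.W) (X : List (Form × Form)) (Δ : List Form)
    (C : Form) : Prop :=
  ∃ c : PointedModel, SubsimIntoCone M w c ∧ c.ForcesImps X ∧ (∀ D ∈ Δ, c.Forces D) ∧ ¬ c.Forces C

variable {M : KripkeModel}

theorem HasCountermodel.of_hyps {w : M.W} {X : List (Form × Form)} {Δ Δ' : List Form} {C : Form}
    (h : HasCountermodel M w X Δ' C)
    (hΔ : ∀ c : PointedModel, (∀ D ∈ Δ', c.Forces D) → ∀ D ∈ Δ, c.Forces D) :
    HasCountermodel M w X Δ C :=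
  let ⟨c, hc, hcX, hcΔ, hcC⟩ := h
  ⟨c, hc, hcX, hΔ c hcΔ, hcC⟩

theorem IsCover.hasCountermodel {w : M.W} {X : List (Form × Form)} {ι : Type}
    {c : ι → PointedModel} (hK : IsCover M w X c) {C : Form}
    (hC : ∀ g : PointedModel, (∀ i A, g.Forces A → (c i).Forces A) →
      (∀ A, A.rho = 0 → g.Forces A → M.Forces w A) → ¬ g.Forces C) :
    HasCountermodel M w X [] C :=
  ⟨glue w c hK.subsimIntoCone, subsimIntoCone_glue w c _, hK.forcesImps_glue, by simp,
    hC _ (fun i _ h => h.of_glue i) fun _ hA h => forces_of_forces_glue hA h⟩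

theorem hasCountermodel_or_isCover {w : M.W} {X : List (Form × Form)} {C : Form}
    (ihP : ∀ pr ∈ splits X, ¬ M.Forces w (approxPremise pr.2 pr.1.1 pr.1.2) →
      (pr.1.1.rho = 0 ∧ ¬ M.Forces w pr.1.1) ∨
        ∃ c : PointedModel, SubsimIntoCone M w c ∧ c.ForcesImps X ∧ ¬ c.Forces pr.1.1)
    (ihH : ∀ pr ∈ splits X, ¬ M.Forces w (approxHyps pr.2 [pr.1.2] C) →
      HasCountermodel M w pr.2 [pr.1.2] C)
    (h : ∀ d ∈ approxUses X C, ¬ M.Forces w d) :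
    HasCountermodel M w X [] C ∨ ∃ (ι : Type) (c : ι → PointedModel), IsCover M w X c := by
  by_cases hH : ∃ pr ∈ splits X, ¬ M.Forces w (approxHyps pr.2 [pr.1.2] C)
  · obtain ⟨pr, hpr, hn⟩ := hH
    obtain ⟨c, hc, hcX, hcF, hcC⟩ := ihH pr hpr hn
    have hF : c.Forces pr.1.2 := hcF _ (List.mem_singleton_self _)
    exact .inl ⟨c, hc, (KripkeModel.forcesImps_of_mem_splits hpr).2
      ⟨fun v hv _ => hF.mono hv, hcX⟩, by simp, hcC⟩
  push Not at hH
  have hP : ∀ pr ∈ splits X, ¬ M.Forces w (approxPremise pr.2 pr.1.1 pr.1.2) :=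
    fun pr hpr hP => h _ (mem_approxUses.2 ⟨pr, hpr, rfl⟩) ⟨hP, hH pr hpr⟩
  let ι := {p : Form × Form //
    ∃ c : PointedModel, SubsimIntoCone M w c ∧ c.ForcesImps X ∧ ¬ c.Forces p.1}
  refine .inr ⟨ι, fun i => i.2.choose,
    ⟨fun i => i.2.choose_spec.1, fun i => i.2.choose_spec.2.1, fun p hp => ?_⟩⟩
  obtain ⟨r, hr⟩ := exists_mem_splits hp
  exact (ihP _ hr (hP _ hr)).symm.imp_left fun hc =>
    ⟨⟨p, hc⟩, (⟨p, hc⟩ : ι).2.choose_spec.2.2⟩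

/-- The semantic content of the contraction-free rule for `(H → K) → F`. -/
theorem HasCountermodel.exists_refutes_imp {w : M.W} {X : List (Form × Form)} {H K F : Form}
    (h : HasCountermodel M w X [H, .imp K F] K) :
    ∃ c : PointedModel, SubsimIntoCone M w c ∧ c.ForcesImps ((.imp H K, F) :: X) ∧
      ¬ c.Forces (.imp H K) := by
  obtain ⟨c, hc, hcX, hcΔ, hcK⟩ := h
  obtain ⟨hH, hKF⟩ : c.Forces H ∧ c.Forces (.imp K F) := by simpa using hcΔ
  refine ⟨c, hc, List.forall_mem_cons.2 ⟨?_, hcX⟩, fun hHK => hcK (hHK _ le_rfl hH)⟩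
  exact fun v hv hHK => hKF v hv (hHK v le_rfl (hH.mono hv))

theorem HasCountermodel.cons_of_rho_eq_zero {v w : M.W} (hwv : w ≤ v) {X : List (Form × Form)}
    {Δ : List Form} {C D : Form} (h : HasCountermodel M v X Δ C) (hD : D.rho = 0)
    (hvD : M.Forces v D) : HasCountermodel M w X (D :: Δ) C :=
  let ⟨c, hc, hcX, hcΔ, hcC⟩ := h
  ⟨c, hc.mono hwv, hcX, List.forall_mem_cons.2 ⟨hc.forces_of_rho_eq_zero hD hvD, hcΔ⟩, hcC⟩

theorem HasCountermodel.of_rho_eq_zero {w : M.W} {X : List (Form × Form)} {C : Form}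
    (hC : C.rho = 0) (hw : ¬ M.Forces w C)
    (hU : HasCountermodel M w X [] C ∨ ∃ (ι : Type) (c : ι → PointedModel), IsCover M w X c) :
    HasCountermodel M w X [] C :=
  hU.elim id fun ⟨_, _, hK⟩ => hK.hasCountermodel fun _ _ hgw hgC => hw (hgw C hC hgC)

theorem HasCountermodel.or {w : M.W} {X : List (Form × Form)} {C₁ C₂ : Form}
    (h₁ : HasCountermodel M w X [] C₁) (h₂ : HasCountermodel M w X [] C₂)
    (hU : HasCountermodel M w X [] (.or C₁ C₂) ∨
      ∃ (ι : Type) (c : ι → PointedModel), IsCover M w X c) :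
    HasCountermodel M w X [] (.or C₁ C₂) := by
  refine hU.elim id fun ⟨ι, c, hK⟩ => ?_
  obtain ⟨c₁, hc₁, hc₁X, -, hc₁C⟩ := h₁
  obtain ⟨c₂, hc₂, hc₂X, -, hc₂C⟩ := h₂
  refine ((hK.option hc₁ hc₁X).option hc₂ hc₂X).hasCountermodel fun g hg _ hC => ?_
  rcases hC with hC | hC
  exacts [hc₁C (hg (some none) _ hC), hc₂C (hg none _ hC)]

theorem hasCountermodel_of_not_forces_approxGoal {X : List (Form × Form)} {C : Form}
    (hX : NoJunctionPremises X) {w : M.W} (h : ¬ M.Forces w (approxGoal X C)) :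
    HasCountermodel M w X [] C := by
  refine approxGoal.induct
    (motive1 := fun X E F => (∀ A B, E ≠ .and A B) → (∀ A B, E ≠ .or A B) →
      NoJunctionPremises X → ∀ w, ¬ M.Forces w (approxPremise X E F) →
        (E.rho = 0 ∧ ¬ M.Forces w E) ∨ ∃ c : PointedModel, SubsimIntoCone M w c ∧
          c.ForcesImps ((E, F) :: X) ∧ ¬ c.Forces E)
    (motive2 := fun X Δ C => NoJunctionPremises X → ∀ w, ¬ M.Forces w (approxHyps X Δ C) →
      HasCountermodel M w X Δ C)
    (motive3 := fun X C => NoJunctionPremises X → ∀ w, ¬ M.Forces w (approxGoal X C) →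
      HasCountermodel M w X [] C)
    (motive4 := fun X C => NoJunctionPremises X → ∀ w, (∀ d ∈ approxUses X C, ¬ M.Forces w d) →
      HasCountermodel M w X [] C ∨ ∃ (ι : Type) (c : ι → PointedModel), IsCover M w X c)
    ?_ ?_ ?_ ?_ ?_ ?_ ?_ ?_ ?_ ?_ ?_ ?_ ?_ ?_ X C hX w h
  · intro X F H K ih _ _ hX w h
    rw [approxPremise.eq_1] at h
    exact .inr (ih hX w h).exists_refutes_imp
  · intro X F E himp hand hor _ w h
    rw [approxPremise.eq_2 _ _ _ himp] at h
    exact .inl ⟨Form.rho_eq_zero_of_ne hand hor himp, h⟩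
  · intro X C ih hX w h
    rw [approxHyps.eq_1] at h
    exact ih hX w h
  · intro X C D₁ D₂ Δ ih hX w h
    rw [approxHyps.eq_2] at h
    exact (ih hX w h).of_hyps fun c hc => by
      simpa [PointedModel.Forces, KripkeModel.Forces, and_assoc] using hc
  · intro X C D₁ D₂ Δ ih₁ ih₂ hX w h
    rw [approxHyps.eq_3] at h
    by_cases h₁ : M.Forces w (approxHyps X (D₁ :: Δ) C)
    · exact (ih₂ hX w fun h₂ => h ⟨h₁, h₂⟩).of_hyps fun c hc => by
        simp_all [PointedModel.Forces, KripkeModel.Forces]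
    · exact (ih₁ hX w h₁).of_hyps fun c hc => by
        simp_all [PointedModel.Forces, KripkeModel.Forces]
  · intro X C A B K Δ ih hX w h
    rw [approxHyps.eq_4] at h
    exact (ih hX w h).of_hyps fun c hc => by
      simpa [PointedModel.Forces, KripkeModel.forces_imp_and_iff] using hc
  · intro X C A B K Δ ih hX w h
    rw [approxHyps.eq_5] at h
    exact (ih hX w h).of_hyps fun c hc => by
      simpa [PointedModel.Forces, KripkeModel.forces_imp_or_iff, and_assoc] using hc
  · intro X C E K Δ hand hor ih hX w h
    rw [approxHyps.eq_6 _ _ _ _ _ hand hor] at h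
    obtain ⟨c, hc, hcX, hcΔ, hcC⟩ := ih (List.forall_mem_cons.2 ⟨⟨hand, hor⟩, hX⟩) w h
    obtain ⟨hEK, hcX⟩ := List.forall_mem_cons.1 hcX
    exact ⟨c, hc, hcX, List.forall_mem_cons.2 ⟨hEK, hcΔ⟩, hcC⟩
  · intro X C D Δ hand hor h₁ h₂ himp ih hX w h
    rw [approxHyps.eq_7 _ _ _ _ hand hor h₁ h₂ himp] at h
    simp only [KripkeModel.Forces, not_forall] at h
    obtain ⟨v, hwv, hD, hS⟩ := h
    exact (ih hX v hS).cons_of_rho_eq_zero hwv (Form.rho_eq_zero_of_ne hand hor himp) hD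
  · intro X C₁ C₂ ih₁ ih₂ hX w h
    rw [approxGoal.eq_1] at h
    by_cases h₁ : M.Forces w (approxGoal X C₁)
    · obtain ⟨c, hc, hcX, -, hcC⟩ := ih₂ hX w fun h₂ => h ⟨h₁, h₂⟩
      exact ⟨c, hc, hcX, by simp, fun hC => hcC hC.2⟩
    · obtain ⟨c, hc, hcX, -, hcC⟩ := ih₁ hX w h₁
      exact ⟨c, hc, hcX, by simp, fun hC => hcC hC.1⟩
  · intro X C₁ C₂ ih₁ ih₂ ihU hX w h
    rw [approxGoal.eq_2, KripkeModel.forces_listDisj] at h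
    simp only [List.mem_cons, exists_eq_or_imp, not_or, not_exists, not_and] at h
    obtain ⟨h₁, h₂, hU⟩ := h
    exact (ih₁ hX w h₁).or (ih₂ hX w h₂) (ihU hX w hU)
  · intro X H K ih hX w h
    rw [approxGoal.eq_3] at h
    obtain ⟨c, hc, hcX, hcH, hcK⟩ := ih hX w h
    exact ⟨c, hc, hcX, by simp, fun hHK => hcK (hHK _ le_rfl (hcH H (List.mem_singleton_self _)))⟩
  · intro X C hand hor himp ihU hX w h
    rw [approxGoal.eq_4 _ _ hand hor himp, KripkeModel.forces_listDisj] at h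
    simp only [List.mem_cons, exists_eq_or_imp, not_or, not_exists, not_and] at h
    exact .of_rho_eq_zero (Form.rho_eq_zero_of_ne hand hor himp) h.1 (ihU hX w h.2)
  · intro X C ihP ihH hX w h
    refine hasCountermodel_or_isCover (fun pr hpr hn => ?_)
      (fun pr hpr => ihH ⟨pr, hpr⟩ (hX.of_mem_splits hpr) w) h
    have hE := hX pr.1 ((mem_iff_of_mem_splits hpr).2 (.inl rfl))
    refine (ihP ⟨pr, hpr⟩ hE.1 hE.2 (hX.of_mem_splits hpr) w hn).imp_right ?_
    rintro ⟨c, hc, hcX, hcE⟩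
    exact ⟨c, hc, (KripkeModel.forcesImps_of_mem_splits hpr).2 (List.forall_mem_cons.1 hcX), hcE⟩

end Countermodels

def nnilApprox (A : Form) : Form := approxGoal [] A

theorem nnilc_nnilApprox (A : Form) : NNILc (nnilApprox A) :=
  rho_approxGoal_le (by simp [NoJunctionPremises]) A

theorem forces_of_forces_nnilApprox {M : KripkeModel} {w : M.W} {A : Form}
    (h : M.Forces w (nnilApprox A)) : M.Forces w A :=
  forces_of_forces_approxGoal h (by simp [KripkeModel.ForcesImps])

theorem forces_nnilApprox_of_nnilc {A B : Form} (hB : NNILc B)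
    (hBA : ∀ (N : KripkeModel) (v : N.W), N.Forces v B → N.Forces v A) {M : KripkeModel} {w : M.W}
    (hw : M.Forces w B) : M.Forces w (nnilApprox A) := by
  by_contra h
  obtain ⟨c, hc, -, -, hcA⟩ :=
    hasCountermodel_of_not_forces_approxGoal (by simp [NoJunctionPremises]) h
  exact hcA (hBA c.N c.root (hc.forces_of_nnil hB hw))

/-- best NNIL-approximation: the NNIL-algorithm terminates on every
input, i.e. there is a total operation `star` such that `star A` is an NNIL
proposition with IPC_□ ⊢ star A → A which is the best NNIL approximation of A from
below, and the construction is monotone. -/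
theorem nnil_best_approximation :
    ∃ star : Form → Form,
      (∀ A : Form, NNILc (star A) ∧ IPCbProves (.imp (star A) A) ∧
        ∀ B : Form, NNILc B → IPCbProves (.imp B A) → IPCbProves (.imp B (star A))) ∧
      ∀ A₁ A₂ : Form, IPCbProves (.imp A₁ A₂) → IPCbProves (.imp (star A₁) (star A₂)) := by
  refine ⟨nnilApprox, fun A => ⟨nnilc_nnilApprox A, ?_, fun B hB hBA => ?_⟩, fun A₁ A₂ h => ?_⟩
  · exact ipcbProves_imp_iff.2 fun _ _ => forces_of_forces_nnilApprox
  · exact ipcbProves_imp_iff.2 fun _ _ => forces_nnilApprox_of_nnilc hB (ipcbProves_imp_iff.1 hBA)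
  · exact ipcbProves_imp_iff.2 fun _ _ => forces_nnilApprox_of_nnilc (nnilc_nnilApprox A₁)
      fun N v hv => ipcbProves_imp_iff.1 h N v (forces_of_forces_nnilApprox hv)

end PLHA
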